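/- Conjugacy of size-one L-shaped rules with the Toom rule (supporting Theorem on |S_N| = |S_E| = 1): let n ≥ 1 and let k_E, k_N ≥ 1 divide n, with m = n / k_E and m' = n / k_N. Fix an offset (i₀, j₀) ∈ (ZMod n)² and define ψ : (ZMod m) × (ZMod m') → (ZMod n) × (ZMod n) by ψ(a,b) = (i₀ + k_E·a.val, j₀ + k_N·b.val). Let F be the LFMCA on the n×n periodic grid with S_E = {k_E} and S_N = {k_N}, and let T be the Toom freezing majority CA on the m×m' periodic grid (T(y)_{(a,b)} = +1 if y_{(a,b)} = +1 or y_{(a+1,b)} + y_{(a,b+1)} > 0, else -1). Then for every configuration x on (ZMod n)² with values in {-1,+1} and every (a,b): F(x)_{ψ(a,b)} = T(x ∘ ψ)_{(a,b)}. -/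
import Mathlib


/-- The L-shaped freezing majority cellular automaton on the `n × n` periodic grid. -/
def lfmca (n : ℕ) (SN SE : Finset ℕ) (x : ZMod n × ZMod n → ℤ) :
    ZMod n × ZMod n → ℤ :=
  fun u =>
    if x u = 1 ∨
        0 < (∑ k ∈ SN, x (u.1, u.2 + (k : ZMod n))) +
            (∑ k ∈ SE, x (u.1 + (k : ZMod n), u.2)) then 1 else -1

/-- The Toom freezing majority cellular automaton on the `m × m'` periodic grid. -/
def toom (m m' : ℕ) (y : ZMod m × ZMod m' → ℤ) : ZMod m × ZMod m' → ℤ :=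
  fun u => if y u = 1 ∨ 0 < y (u.1 + 1, u.2) + y (u.1, u.2 + 1) then 1 else -1

lemma succ_val_cast (m k n : ℕ) (hm : 0 < m) (hkm : k * m = n) (a : ZMod m) :
    ((k * (a + 1).val : ℕ) : ZMod n) = ((k * a.val : ℕ) : ZMod n) + (k : ZMod n) := by
  haveI : NeZero m := ⟨hm.ne'⟩
  subst hkm
  have hval : (a + 1).val = (a.val + (1 : ZMod m).val) % m := ZMod.val_add a 1
  have h1 : (a.val + (1 : ZMod m).val) % m ≡ a.val + (1 : ZMod m).val [MOD m] :=
    Nat.mod_modEq _ m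
  have h2 : k * ((a.val + (1 : ZMod m).val) % m) ≡ k * (a.val + (1 : ZMod m).val) [MOD k * m] :=
    h1.mul_left' k
  rw [hval, (ZMod.natCast_eq_natCast_iff _ _ _).mpr h2]
  by_cases hone : m = 1
  · have h0 : ∀ c : ZMod 1, c.val = 0 := by subst hone; decide
    subst hone
    simp only [h0, Nat.mul_zero, Nat.cast_zero]
    simpa using (ZMod.natCast_self (k*1)).symm
  · have : (1 : ZMod m).val = 1 := ZMod.val_one_eq_one_mod m ▸ Nat.mod_eq_of_lt (by omega)
    rw [this]
    push_cast
    ring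

theorem lfmca_size_one_conjugate_toom (n : ℕ) (hn : 1 ≤ n)
    (kE kN : ℕ) (hkE : 1 ≤ kE) (hkN : 1 ≤ kN)
    (hkEn : kE ∣ n) (hkNn : kN ∣ n)
    (m m' : ℕ) (hm : m = n / kE) (hm' : m' = n / kN)
    (i₀ j₀ : ZMod n)
    (ψ : ZMod m × ZMod m' → ZMod n × ZMod n)
    (hψ : ∀ ab : ZMod m × ZMod m',
      ψ ab = (i₀ + ((kE * ab.1.val : ℕ) : ZMod n), j₀ + ((kN * ab.2.val : ℕ) : ZMod n)))
    (x : ZMod n × ZMod n → ℤ) (hx : ∀ u, x u = -1 ∨ x u = 1) :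
    ∀ (a : ZMod m) (b : ZMod m'),
      lfmca n {kN} {kE} x (ψ (a, b)) = toom m m' (x ∘ ψ) (a, b) := by
  intro a b
  have hkEm : kE * m = n := by rw [hm]; exact Nat.mul_div_cancel' hkEn
  have hkNm : kN * m' = n := by rw [hm']; exact Nat.mul_div_cancel' hkNn
  have hmpos : 0 < m := hm ▸ Nat.div_pos (Nat.le_of_dvd (by omega) hkEn) (by omega)
  have hm'pos : 0 < m' := hm' ▸ Nat.div_pos (Nat.le_of_dvd (by omega) hkNn) (by omega)
  have hE : ψ (a + 1, b) = ((ψ (a, b)).1 + (kE : ZMod n), (ψ (a, b)).2) := by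
    rw [hψ, hψ]
    simp only
    rw [succ_val_cast m kE n hmpos hkEm a]
    ext <;> simp <;> ring
  have hN : ψ (a, b + 1) = ((ψ (a, b)).1, (ψ (a, b)).2 + (kN : ZMod n)) := by
    rw [hψ, hψ]
    simp only
    rw [succ_val_cast m' kN n hm'pos hkNm b]
    ext <;> simp <;> ring
  simp only [lfmca, toom, Function.comp_apply, Finset.sum_singleton, hE, hN]
  congr 1
  rw [eq_iff_iff]
  constructor <;> rintro (h | h) <;> [left; right; left; right] <;> first
    | exact h
    | linarith
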